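/- Let G: ℝ^m → ℝ be differentiable, H(Φ, c_Φ)-smooth, and H(φ, c_φ)-convex, where Φ and φ are norm power functions (of orders r_Φ > 1 and r_φ > 1) and c_Φ, c_φ ≥ 0. Suppose G attains its global minimum G_* = min_μ G(μ). Then for every μ ∈ ℝ^m: Φ*(∇G(μ)) − c_Φ ≤ G(μ) − G_* ≤ φ*(∇G(μ)) + c_φ, where Φ* and φ* are the Legendre–Fenchel conjugates of Φ and φ. -/

import Mathlib

open scoped InnerProductSpace

/-- The Legendre–Fenchel conjugate of a function on `ℝ^m`. -/
noncomputable def fenchelConj {m : ℕ} (Φ : EuclideanSpace ℝ (Fin m) → ℝ)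
    (ν : EuclideanSpace ℝ (Fin m)) : ℝ :=
  ⨆ μ : EuclideanSpace ℝ (Fin m), (⟪ν, μ⟫_ℝ - Φ μ)

/-- `N` is a norm on `ℝ^m`. -/
def IsNorm {m : ℕ} (N : EuclideanSpace ℝ (Fin m) → ℝ) : Prop :=
  N 0 = 0 ∧ (∀ x, x ≠ 0 → 0 < N x) ∧
    (∀ (a : ℝ) (x), N (a • x) = |a| * N x) ∧
    (∀ x y, N (x + y) ≤ N x + N y)


lemma isNorm_neg {m : ℕ} {N : EuclideanSpace ℝ (Fin m) → ℝ} (hN : IsNorm N) (x) :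
    N (-x) = N x := by
  have := hN.2.2.1 (-1) x
  simpa using this

lemma isNorm_nonneg {m : ℕ} {N : EuclideanSpace ℝ (Fin m) → ℝ} (hN : IsNorm N) (x) :
    0 ≤ N x := by
  rcases eq_or_ne x 0 with rfl | h
  · exact le_of_eq hN.1.symm
  · exact (hN.2.1 x h).le

lemma isNorm_continuous {m : ℕ} {N : EuclideanSpace ℝ (Fin m) → ℝ} (hN : IsNorm N) :
    Continuous N := by
  obtain ⟨C, hC0, hC⟩ : ∃ C, 0 ≤ C ∧ ∀ x, N x ≤ C * ‖x‖ := by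
    refine ⟨∑ i, N (EuclideanSpace.single i 1),
      Finset.sum_nonneg fun i _ => isNorm_nonneg hN _, fun x => ?_⟩
    have hx : x = ∑ i, x i • EuclideanSpace.single i (1:ℝ) := by
      have := (EuclideanSpace.basisFun (Fin m) ℝ).sum_repr x
      simp only [EuclideanSpace.basisFun_apply, EuclideanSpace.basisFun_repr] at this
      exact this.symm
    have hsum : ∀ (s : Finset (Fin m)) (f : Fin m → EuclideanSpace ℝ (Fin m)),
        N (∑ i ∈ s, f i) ≤ ∑ i ∈ s, N (f i) := by
      intro s
      induction s using Finset.induction with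
      | empty => intro f; simp [hN.1]
      | insert _ _ hi ih =>
        intro f
        rw [Finset.sum_insert hi, Finset.sum_insert hi]
        exact le_trans (hN.2.2.2 _ _) (by gcongr; exact ih f)
    calc N x = N (∑ i, x i • EuclideanSpace.single i (1:ℝ)) := by rw [← hx]
      _ ≤ ∑ i, N (x i • EuclideanSpace.single i (1:ℝ)) := hsum _ _
      _ = ∑ i, |x i| * N (EuclideanSpace.single i (1:ℝ)) := by
          simp [hN.2.2.1]
      _ ≤ ∑ i, ‖x‖ * N (EuclideanSpace.single i (1:ℝ)) := by
          gcongr with i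
          · exact isNorm_nonneg hN _
          · rw [EuclideanSpace.norm_eq]
            have h1 : |x i| = Real.sqrt (‖x i‖ ^ 2) := by
              rw [Real.sqrt_sq_eq_abs, Real.norm_eq_abs, abs_abs]
            rw [h1]
            apply Real.sqrt_le_sqrt
            exact Finset.single_le_sum (fun j _ => sq_nonneg ‖x j‖) (Finset.mem_univ i)
      _ = (∑ i, N (EuclideanSpace.single i 1)) * ‖x‖ := by simp [Finset.sum_mul, mul_comm]
  have hlip : LipschitzWith (Real.toNNReal C) N := by
    apply LipschitzWith.of_dist_le_mul
    intro x y
    have h1 : N x - N y ≤ N (x - y) := by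
      have := hN.2.2.2 (x - y) y
      simpa using this
    have h2 : N y - N x ≤ N (x - y) := by
      have := hN.2.2.2 (y - x) x
      have h3 := isNorm_neg hN (x - y)
      simp only [sub_add_cancel] at this
      rw [← neg_sub x y, h3] at this
      linarith
    have h4 : |N x - N y| ≤ N (x - y) := abs_sub_le_iff.2 ⟨h1, h2⟩
    have h5 : N (x - y) ≤ C * ‖x - y‖ := hC _
    rw [Real.dist_eq, dist_eq_norm]
    calc |N x - N y| ≤ C * ‖x-y‖ := h4.trans h5
      _ ≤ (Real.toNNReal C) * ‖x-y‖ := by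
          gcongr; exact Real.le_coe_toNNReal C
  exact hlip.continuous

lemma isNorm_lower {m : ℕ} {N : EuclideanSpace ℝ (Fin m) → ℝ} (hN : IsNorm N)
    [Nontrivial (EuclideanSpace ℝ (Fin m))] :
    ∃ c > 0, ∀ x, c * ‖x‖ ≤ N x := by
  have hsph : (Metric.sphere (0 : EuclideanSpace ℝ (Fin m)) 1).Nonempty :=
    NormedSpace.sphere_nonempty.2 zero_le_one
  obtain ⟨x₀, hx₀, hmin⟩ := (isCompact_sphere (0 : EuclideanSpace ℝ (Fin m)) 1).exists_isMinOn
    hsph (isNorm_continuous hN).continuousOn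
  have hx₀n : ‖x₀‖ = 1 := by simpa using hx₀
  have hx₀0 : x₀ ≠ 0 := by
    intro h; rw [h] at hx₀n; simp at hx₀n
  refine ⟨N x₀, hN.2.1 x₀ hx₀0, fun x => ?_⟩
  rcases eq_or_ne x 0 with rfl | hx
  · simp [hN.1]
  · have hxn : (0:ℝ) < ‖x‖ := norm_pos_iff.2 hx
    have hu : (‖x‖⁻¹ • x) ∈ Metric.sphere (0 : EuclideanSpace ℝ (Fin m)) 1 := by
      simp [norm_smul, abs_of_pos (inv_pos.2 hxn), inv_mul_cancel₀ hxn.ne']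
    have h1 : N x₀ ≤ N (‖x‖⁻¹ • x) := hmin hu
    have h2 : N (‖x‖⁻¹ • x) = ‖x‖⁻¹ * N x := by
      rw [hN.2.2.1]; rw [abs_of_pos (inv_pos.2 hxn)]
    rw [h2] at h1
    calc N x₀ * ‖x‖ ≤ (‖x‖⁻¹ * N x) * ‖x‖ := by gcongr
      _ = N x := by field_simp

lemma isNorm_bddAbove {m : ℕ} {N : EuclideanSpace ℝ (Fin m) → ℝ} (hN : IsNorm N)
    {r : ℝ} (hr : 1 < r) (ν : EuclideanSpace ℝ (Fin m)) :
    BddAbove (Set.range fun x : EuclideanSpace ℝ (Fin m) => ⟪ν, x⟫_ℝ - N x ^ r) := by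
  rcases subsingleton_or_nontrivial (EuclideanSpace ℝ (Fin m)) with hs | hs
  · exact (Set.finite_range _).bddAbove
  · obtain ⟨c, hc, hcle⟩ := isNorm_lower hN
    set a := ‖ν‖ with ha
    set b := c ^ r with hb
    have hb0 : 0 < b := Real.rpow_pos_of_pos hc r
    have ha0 : 0 ≤ a := norm_nonneg ν
    refine ⟨max 0 (a * (a / b) ^ (1 / (r - 1))), ?_⟩
    rintro - ⟨x, rfl⟩
    set t := ‖x‖ with htdef
    have ht0 : 0 ≤ t := norm_nonneg x
    have step1 : ⟪ν, x⟫_ℝ - N x ^ r ≤ a * t - b * t ^ r := by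
      have h1 : ⟪ν, x⟫_ℝ ≤ a * t := real_inner_le_norm ν x
      have h2 : b * t ^ r ≤ N x ^ r := by
        rw [← Real.mul_rpow hc.le ht0]
        exact Real.rpow_le_rpow (by positivity) (hcle x) (by linarith)
      linarith
    refine step1.trans ?_
    rcases eq_or_lt_of_le ht0 with h | h
    · simp [← h, Real.zero_rpow (by linarith : r ≠ 0)]
    · rcases le_or_gt (t ^ (r - 1)) (a / b) with hcase | hcase
      · have htle : t ≤ (a / b) ^ (1 / (r - 1)) := by
          have hrp : (0:ℝ) ≤ 1 / (r - 1) := by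
            apply le_of_lt; apply div_pos one_pos; linarith
          have := Real.rpow_le_rpow (Real.rpow_nonneg ht0 _) hcase hrp
          rwa [← Real.rpow_mul ht0, mul_one_div,
            div_self (by linarith : r - 1 ≠ 0), Real.rpow_one] at this
        calc a * t - b * t ^ r ≤ a * t := by
              have : 0 ≤ b * t ^ r := by positivity
              linarith
          _ ≤ a * (a / b) ^ (1 / (r - 1)) := by gcongr
          _ ≤ max 0 (a * (a / b) ^ (1 / (r - 1))) := le_max_right _ _
      · have : a * t ≤ b * t ^ r := by
          have h1 : a < b * t ^ (r - 1) := by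
            rw [← div_lt_iff₀' hb0]; exact hcase
          have h2 : t ^ (r - 1) * t = t ^ r := by
            have h3 := Real.rpow_add h (r - 1) 1
            rw [Real.rpow_one] at h3
            rw [← h3]; norm_num
          calc a * t ≤ (b * t ^ (r - 1)) * t := by gcongr
            _ = b * t ^ r := by rw [mul_assoc, h2]
        have : a * t - b * t ^ r ≤ 0 := by linarith
        exact this.trans (le_max_left _ _)

theorem stmt7 {m : ℕ}
    (NΦ Nφ : EuclideanSpace ℝ (Fin m) → ℝ) (hNΦ : IsNorm NΦ) (hNφ : IsNorm Nφ)
    (rΦ rφ : ℝ) (hrΦ : 1 < rΦ) (hrφ : 1 < rφ)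
    (Φ φ : EuclideanSpace ℝ (Fin m) → ℝ)
    (hΦ : ∀ μ, Φ μ = NΦ μ ^ rΦ) (hφ : ∀ μ, φ μ = Nφ μ ^ rφ)
    (cΦ cφ : ℝ) (hcΦ : 0 ≤ cΦ) (hcφ : 0 ≤ cφ)
    (G : EuclideanSpace ℝ (Fin m) → ℝ) (hG : Differentiable ℝ G)
    (hsmooth : ∀ μ ν : EuclideanSpace ℝ (Fin m),
      G μ - G ν - ⟪gradient G ν, μ - ν⟫_ℝ ≤ Φ (μ - ν) + cΦ)
    (hconvex : ∀ μ ν : EuclideanSpace ℝ (Fin m),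
      φ (μ - ν) - cφ ≤ G μ - G ν - ⟪gradient G ν, μ - ν⟫_ℝ)
    (μstar : EuclideanSpace ℝ (Fin m)) (hmin : ∀ μ, G μstar ≤ G μ) :
    ∀ μ : EuclideanSpace ℝ (Fin m),
      fenchelConj Φ (gradient G μ) - cΦ ≤ G μ - G μstar ∧
      G μ - G μstar ≤ fenchelConj φ (gradient G μ) + cφ := by
  intro μ
  have hΦneg : ∀ x, Φ (-x) = Φ x := by
    intro x; rw [hΦ, hΦ, isNorm_neg hNΦ]
  have hφneg : ∀ x, φ (-x) = φ x := by
    intro x; rw [hφ, hφ, isNorm_neg hNφ]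
  constructor
  · have hbound : ∀ x, ⟪gradient G μ, x⟫_ℝ - Φ x ≤ G μ - G μstar + cΦ := by
      intro x
      have h := hsmooth (μ - x) μ
      have hsub : μ - x - μ = -x := by abel
      rw [hsub, inner_neg_right, hΦneg] at h
      have hm := hmin (μ - x)
      linarith
    have : fenchelConj Φ (gradient G μ) ≤ G μ - G μstar + cΦ := ciSup_le hbound
    linarith
  · have key := hconvex μstar μ
    have hsub : μstar - μ = -(μ - μstar) := by abel
    rw [hsub, inner_neg_right, hφneg] at key
    have hbdd : BddAbove (Set.range fun x : EuclideanSpace ℝ (Fin m) =>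
        ⟪gradient G μ, x⟫_ℝ - φ x) := by
      have heq : (fun x : EuclideanSpace ℝ (Fin m) => ⟪gradient G μ, x⟫_ℝ - φ x)
          = fun x => ⟪gradient G μ, x⟫_ℝ - Nφ x ^ rφ := by
        funext x; rw [hφ]
      rw [heq]
      exact isNorm_bddAbove hNφ hrφ _
    have hle := le_ciSup hbdd (μ - μstar)
    have : ⟪gradient G μ, μ - μstar⟫_ℝ - φ (μ - μstar) ≤ fenchelConj φ (gradient G μ) := hle
    linarith
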